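/- If A is a total assignment over dom(A) = atom(Π) ∪ body(Π) that is a solution for the set of nogoods Δ_β for a body β = {p_1,...,p_m, not p_{m+1},..., not p_n}, then β ∈ T_A if and only if {p_1,...,p_m} ⊆ T_A and {p_{m+1},...,p_n} ⊆ F_A. -/
import Mathlib


/-- Signed literals over a domain `V`: `pos v` is `T v`, `neg v` is `F v`. -/
inductive Lit (V : Type) where
  | pos : V → Lit V
  | neg : V → Lit V
deriving DecidableEq

/-- `T_A`: the set of domain elements assigned true. -/
def Tass {V : Type} (A : Set (Lit V)) : Set V := {v | Lit.pos v ∈ A}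

/-- `F_A`: the set of domain elements assigned false. -/
def Fass {V : Type} (A : Set (Lit V)) : Set V := {v | Lit.neg v ∈ A}

/-- if a total assignment `A` over a domain containing the
atoms of the body and the body element `b` itself is a solution for `Δ_β`,
then `b ∈ T_A` iff all positive body atoms are in `T_A` and
all negative body atoms are in `F_A`. -/
theorem stmt0 {V : Type} (D : Set V) (P N : Finset V) (b : V)
    (hPD : ↑P ⊆ D) (hND : ↑N ⊆ D) (hbD : b ∈ D)
    (A : Set (Lit V))
    (htotal : Tass A ∪ Fass A = D)
    (hcons : Tass A ∩ Fass A = ∅)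
    (Δβ : Set (Set (Lit V)))
    (hΔ : Δβ =
      insert ((fun p => Lit.pos p) '' ↑P ∪ (fun q => Lit.neg q) '' ↑N ∪ {Lit.neg b})
        ({δ | ∃ p ∈ P, δ = {Lit.neg p, Lit.pos b}} ∪
         {δ | ∃ q ∈ N, δ = {Lit.pos q, Lit.pos b}}))
    (hsol : ∀ δ ∈ Δβ, ¬ δ ⊆ A) :
    Lit.pos b ∈ A ↔ ((∀ p ∈ P, Lit.pos p ∈ A) ∧ (∀ q ∈ N, Lit.neg q ∈ A)) := by

  have key : ∀ v ∈ D, (Lit.pos v ∈ A ↔ Lit.neg v ∉ A) := by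
    intro v hv
    constructor
    · intro hp hn
      have : v ∈ Tass A ∩ Fass A := ⟨hp, hn⟩
      rw [hcons] at this; exact this
    · intro hn
      have : v ∈ Tass A ∪ Fass A := htotal ▸ hv
      cases this with
      | inl h => exact h
      | inr h => exact absurd h hn
  constructor
  · rintro hb
    constructor
    · intro p hp
      have hng : ({Lit.neg p, Lit.pos b} : Set (Lit V)) ∈ Δβ := by
        rw [hΔ]; exact Set.mem_insert_of_mem _ (Or.inl ⟨p, hp, rfl⟩)
      have := hsol _ hng
      by_contra hnp
      have hnA : Lit.neg p ∈ A := by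
        by_contra h
        exact hnp ((key p (hPD hp)).mpr h)
      exact this (by intro x hx; rcases hx with rfl | hx; exact hnA; simp at hx; subst hx; exact hb)
    · intro q hq
      have hng : ({Lit.pos q, Lit.pos b} : Set (Lit V)) ∈ Δβ := by
        rw [hΔ]; exact Set.mem_insert_of_mem _ (Or.inr ⟨q, hq, rfl⟩)
      have := hsol _ hng
      by_contra hnq
      have hqA : Lit.pos q ∈ A := (key q (hND hq)).mpr hnq
      exact this (by intro x hx; rcases hx with rfl | hx; exact hqA; simp at hx; subst hx; exact hb)
  · rintro ⟨hP, hN⟩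
    have hng : ((fun p => Lit.pos p) '' ↑P ∪ (fun q => Lit.neg q) '' ↑N ∪ {Lit.neg b}) ∈ Δβ := by
      rw [hΔ]; exact Set.mem_insert _ _
    have hnot := hsol _ hng
    have : Lit.neg b ∉ A := by
      intro hnb
      apply hnot
      intro x hx
      rcases hx with (⟨p, hp, rfl⟩ | ⟨q, hq, rfl⟩) | hx
      · exact hP p (by simpa using hp)
      · exact hN q (by simpa using hq)
      · simp at hx; subst hx; exact hnb
    exact (key b hbD).mpr this
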